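/- arXiv:2407.04137 — 3 statements merged into one kernel-verified Lean document; each statement's English description precedes it below -/
import Mathlib

section
/- Every autopolar conic body G ⊂ ℝ^d₊ has distance exactly 1 from the origin: inf{|x| : x ∈ G} = 1. -/
/-!
An autopolar set `G` satisfies `⟪x, x⟫ ≥ 1` on `G`, so its points have norm at least one.
Conversely, let `y` be the point of `G` nearest to the origin. The variational inequality of
the projection onto a closed convex set gives `⟪y, w⟫ ≥ ‖y‖²` for every `w ∈ G`, so
`y / ‖y‖²` lies in `G* = G`; minimality of `y` then yields `‖y‖ ≤ ‖y‖⁻¹`, i.e. `‖y‖ ≤ 1`.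
-/

/-- The nonnegative orthant in ℝ^d. -/
def orthant (d : ℕ) : Set (EuclideanSpace ℝ (Fin d)) := {x | ∀ i, 0 ≤ x i}

/-- The polar of a subset of the orthant:
M* = {y ∈ ℝ^d₊ : (y,x) ≥ 1 for all x ∈ M}. -/
def polar {d : ℕ} (M : Set (EuclideanSpace ℝ (Fin d))) :
    Set (EuclideanSpace ℝ (Fin d)) :=
  {y | y ∈ orthant d ∧ ∀ x ∈ M, 1 ≤ (inner ℝ y x : ℝ)}

/-- A conic body: a closed convex proper subset of the orthant whose intersection
with every interior ray is a ray. -/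
def IsConicBody {d : ℕ} (G : Set (EuclideanSpace ℝ (Fin d))) : Prop :=
  IsClosed G ∧ Convex ℝ G ∧ G ⊆ orthant d ∧ G ≠ orthant d ∧
  ∀ v ∈ interior (orthant d),
    ∃ t₀ : ℝ, 0 < t₀ ∧
      G ∩ {x | ∃ t : ℝ, 0 ≤ t ∧ x = t • v} = {x | ∃ t : ℝ, t₀ ≤ t ∧ x = t • v}

open RealInnerProductSpace

section MinimalNorm

variable {F : Type*} [NormedAddCommGroup F] [InnerProductSpace ℝ F]

theorem exists_mem_forall_norm_sq_le_inner {K : Set F} (hne : K.Nonempty)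
    (hcomplete : IsComplete K) (hconv : Convex ℝ K) :
    ∃ y ∈ K, ∀ w ∈ K, ‖y‖ ^ 2 ≤ ⟪y, w⟫ := by
  obtain ⟨y, hyK, hy⟩ := exists_norm_eq_iInf_of_complete_convex hne hcomplete hconv 0
  refine ⟨y, hyK, fun w hw => ?_⟩
  have h := (norm_eq_iInf_iff_real_inner_le_zero hconv hyK).mp hy w hw
  rw [zero_sub, inner_neg_left, inner_sub_right, real_inner_self_eq_norm_sq] at h
  linarith

theorem norm_le_of_norm_sq_le_inner {y w : F} (h : ‖y‖ ^ 2 ≤ ⟪y, w⟫) : ‖y‖ ≤ ‖w‖ := by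
  nlinarith [real_inner_le_norm y w, norm_nonneg y, norm_nonneg w]

end MinimalNorm

section Polar

variable {d : ℕ}

theorem polar_empty : polar (∅ : Set (EuclideanSpace ℝ (Fin d))) = orthant d := by
  ext y
  simp [polar]

theorem one_le_norm_of_mem_of_mem_polar {M : Set (EuclideanSpace ℝ (Fin d))}
    {x : EuclideanSpace ℝ (Fin d)} (hx : x ∈ M) (hx' : x ∈ polar M) : 1 ≤ ‖x‖ := by
  have h : 1 ≤ ⟪x, x⟫ := hx'.2 x hx
  rw [real_inner_self_eq_norm_sq] at h
  nlinarith [norm_nonneg x]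

theorem inv_norm_sq_smul_mem_polar {M : Set (EuclideanSpace ℝ (Fin d))}
    {y : EuclideanSpace ℝ (Fin d)} (hy : y ∈ orthant d) (hy0 : y ≠ 0)
    (hyM : ∀ w ∈ M, ‖y‖ ^ 2 ≤ ⟪y, w⟫) : (‖y‖ ^ 2)⁻¹ • y ∈ polar M := by
  have hpos : 0 < ‖y‖ ^ 2 := by positivity
  refine ⟨fun i => mul_nonneg (inv_nonneg.mpr hpos.le) (hy i), fun w hw => ?_⟩
  rw [real_inner_smul_left, inv_mul_eq_div, le_div_iff₀ hpos, one_mul]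
  exact hyM w hw

end Polar

/-- Every autopolar conic body has distance exactly one from the origin. -/
theorem stmt_11 {d : ℕ} (G : Set (EuclideanSpace ℝ (Fin d)))
    (hG : IsConicBody G) (hauto : polar G = G) :
    sInf ((fun x => ‖x‖) '' G) = 1 := by
  obtain ⟨hclosed, hconv, hsub, hne, -⟩ := hG
  have hGne : G.Nonempty := by
    refine Set.nonempty_iff_ne_empty.mpr fun hempty => hne ?_
    rw [← hauto, hempty, polar_empty]
  have hlow : ∀ x ∈ G, 1 ≤ ‖x‖ := fun x hx =>
    one_le_norm_of_mem_of_mem_polar hx (hauto.symm ▸ hx)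
  obtain ⟨y, hyG, hy⟩ := exists_mem_forall_norm_sq_le_inner hGne hclosed.isComplete hconv
  have hy1 : 1 ≤ ‖y‖ := hlow y hyG
  have hzG : (‖y‖ ^ 2)⁻¹ • y ∈ G := hauto ▸
    inv_norm_sq_smul_mem_polar (hsub hyG) (norm_pos_iff.mp (by linarith)) hy
  have hle : ‖y‖ ≤ ‖y‖⁻¹ := by
    have h := norm_le_of_norm_sq_le_inner (hy _ hzG)
    rwa [norm_smul, norm_inv, norm_pow, norm_norm, pow_two, mul_inv, inv_mul_cancel_right₀
      (by positivity)] at h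
  have hy_eq : ‖y‖ = 1 := le_antisymm
    (by nlinarith [mul_le_mul_of_nonneg_left hle (by positivity : (0 : ℝ) ≤ ‖y‖),
      mul_inv_cancel₀ (by positivity : ‖y‖ ≠ 0)]) hy1
  exact IsLeast.csInf_eq ⟨⟨y, hyG, hy_eq⟩, fun _ ⟨x, hx, hxy⟩ => hxy ▸ hlow x hx⟩
end

section
/- With the setup of the lifting theorem (V admissible splitting ℝ^d₊ into K₁, K₂; φ self-dual on K' = ℝ^d₊ ∩ V; f₁ an antinorm on K₁ with f₁|_{K'} = φ and f₁ ≤ Φ), define f₂(y) = inf_{x ∈ K₁} (y,x)/f₁(x) for y ∈ K₂. Then f₂ restricted to K' equals φ, and f₂(y) ≤ Φ(y) for all y ∈ K₂. -/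
/-!
Write `x'` for the orthogonal projection of `x` to `V`; it stays in the orthant because `μ ≥ 0`.
For `y ∈ K'` and `x ∈ K₁`, orthogonality gives `(y, x) = (y, x')`, and `f₁ x ≤ φ x'`, so
self-duality yields `φ y = φ* y ≤ (y, x') / φ x' ≤ (y, x) / f₁ x`; hence `φ ≤ f₂` on `K'`.
For `y ∈ K₂` and `x ∈ K'` with `φ x ≥ 1`, we have `f₁ x = φ x ≥ 1`, so
`f₂ y ≤ (y, x) / f₁ x ≤ (y, x) = (y', x)`; the infimum over such `x` is `φ* y' = φ y'`.
On `K'` we have `y' = y`, so the two bounds meet.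
-/

open scoped RealInnerProductSpace

section Polar

variable {E : Type*} [NormedAddCommGroup E] [InnerProductSpace ℝ E]

noncomputable def antinormDual (C : Set E) (φ : E → ℝ) (y : E) : ℝ :=
  sInf ((fun x => ⟪y, x⟫) '' {x | x ∈ C ∧ 1 ≤ φ x})

noncomputable def infInnerDiv (C : Set E) (f : E → ℝ) (y : E) : ℝ :=
  sInf ((fun x => ⟪y, x⟫ / f x) '' {x | x ∈ C ∧ f x ≠ 0})

variable {C C₁ : Set E} {φ f : E → ℝ}

lemma inv_smul_mem_and_apply_inv_smul_eq_one (hC : ∀ x ∈ C, ∀ c : ℝ, 0 ≤ c → c • x ∈ C)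
    (hφ : ∀ x ∈ C, ∀ c : ℝ, 0 ≤ c → φ (c • x) = c * φ x) {z : E} (hz : z ∈ C)
    (hφz : 0 < φ z) : (φ z)⁻¹ • z ∈ C ∧ φ ((φ z)⁻¹ • z) = 1 :=
  ⟨hC z hz _ (inv_nonneg.2 hφz.le),
    by rw [hφ z hz _ (inv_nonneg.2 hφz.le), inv_mul_cancel₀ hφz.ne']⟩

lemma antinormDual_le_inner_div (hC : ∀ x ∈ C, ∀ c : ℝ, 0 ≤ c → c • x ∈ C)
    (hφ : ∀ x ∈ C, ∀ c : ℝ, 0 ≤ c → φ (c • x) = c * φ x) {y z : E}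
    (hy : ∀ x ∈ C, 0 ≤ ⟪y, x⟫) (hz : z ∈ C) (hφz : 0 < φ z) :
    antinormDual C φ y ≤ ⟪y, z⟫ / φ z := by
  obtain ⟨hmem, hone⟩ := inv_smul_mem_and_apply_inv_smul_eq_one hC hφ hz hφz
  calc antinormDual C φ y ≤ ⟪y, (φ z)⁻¹ • z⟫ :=
        csInf_le ⟨0, by rintro _ ⟨x, hx, rfl⟩; exact hy x hx.1⟩ ⟨_, ⟨hmem, hone.ge⟩, rfl⟩
    _ = ⟪y, z⟫ / φ z := by rw [real_inner_smul_right, inv_mul_eq_div]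

lemma infInnerDiv_le (hf : ∀ x ∈ C, 0 ≤ f x) {x y : E} (hy : ∀ x ∈ C, 0 ≤ ⟪y, x⟫)
    (hx : x ∈ C) (hfx : f x ≠ 0) : infInnerDiv C f y ≤ ⟪y, x⟫ / f x :=
  csInf_le ⟨0, by rintro _ ⟨z, hz, rfl⟩; exact div_nonneg (hy z hz.1) (hf z hz.1)⟩
    ⟨x, ⟨hx, hfx⟩, rfl⟩

lemma antinormDual_le_infInnerDiv (hC : ∀ x ∈ C, ∀ c : ℝ, 0 ≤ c → c • x ∈ C)
    (hφ : ∀ x ∈ C, ∀ c : ℝ, 0 ≤ c → φ (c • x) = c * φ x) (hne : ∃ x ∈ C₁, f x ≠ 0)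
    (hf : ∀ x ∈ C₁, 0 ≤ f x) {P : E → E} (hP : ∀ x ∈ C₁, P x ∈ C)
    (hfP : ∀ x ∈ C₁, f x ≤ φ (P x)) {y : E} (hy : ∀ x ∈ C, 0 ≤ ⟪y, x⟫)
    (hyP : ∀ x ∈ C₁, ⟪y, x⟫ = ⟪y, P x⟫) :
    antinormDual C φ y ≤ infInnerDiv C₁ f y := by
  obtain ⟨x₀, hx₀, hfx₀⟩ := hne
  refine le_csInf ⟨_, x₀, ⟨hx₀, hfx₀⟩, rfl⟩ ?_
  rintro _ ⟨x, ⟨hx, hfx⟩, rfl⟩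
  have hfx_pos : 0 < f x := (hf x hx).lt_of_ne' hfx
  calc antinormDual C φ y ≤ ⟪y, P x⟫ / φ (P x) :=
        antinormDual_le_inner_div hC hφ hy (hP x hx) (hfx_pos.trans_le (hfP x hx))
    _ ≤ ⟪y, P x⟫ / f x := div_le_div_of_nonneg_left (hy _ (hP x hx)) hfx_pos (hfP x hx)
    _ = ⟪y, x⟫ / f x := by rw [hyP x hx]

lemma infInnerDiv_le_antinormDual (hCC₁ : C ⊆ C₁) (hf : ∀ x ∈ C₁, 0 ≤ f x)
    (hφf : ∀ x ∈ C, φ x ≤ f x) (hne : ∃ x ∈ C, 1 ≤ φ x) {y y' : E}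
    (hy : ∀ x ∈ C₁, 0 ≤ ⟪y, x⟫) (hyy' : ∀ x ∈ C, ⟪y, x⟫ = ⟪y', x⟫) :
    infInnerDiv C₁ f y ≤ antinormDual C φ y' := by
  obtain ⟨x₀, hx₀, hφx₀⟩ := hne
  refine le_csInf ⟨_, x₀, ⟨hx₀, hφx₀⟩, rfl⟩ ?_
  rintro _ ⟨x, ⟨hx, hφx⟩, rfl⟩
  have hfx : 1 ≤ f x := hφx.trans (hφf x hx)
  calc infInnerDiv C₁ f y ≤ ⟪y, x⟫ / f x :=
        infInnerDiv_le hf hy (hCC₁ hx) (zero_lt_one.trans_le hfx).ne'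
    _ ≤ ⟪y, x⟫ := div_le_self (hy x (hCC₁ hx)) hfx
    _ = ⟪y', x⟫ := hyy' x hx

end Polar

section Orthant

variable {d : ℕ}

lemma inner_nonneg_of_mem_orthant {x y : EuclideanSpace ℝ (Fin d)} (hx : x ∈ orthant d)
    (hy : y ∈ orthant d) : 0 ≤ ⟪x, y⟫ := by
  rw [PiLp.inner_apply]
  exact Finset.sum_nonneg fun k _ => mul_nonneg (hy k) (hx k)

variable {i j : Fin d} {μ : ℝ} {proj : EuclideanSpace ℝ (Fin d) → EuclideanSpace ℝ (Fin d)}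

lemma inner_proj_left (hprojorth : ∀ x, ∀ v : EuclideanSpace ℝ (Fin d),
      v i = μ * v j → ⟪x - proj x, v⟫ = 0) (x : EuclideanSpace ℝ (Fin d))
    {v : EuclideanSpace ℝ (Fin d)} (hv : v i = μ * v j) : ⟪proj x, v⟫ = ⟪x, v⟫ := by
  have := hprojorth x v hv
  rwa [inner_sub_left, sub_eq_zero, eq_comm] at this

lemma inner_proj_right (hprojorth : ∀ x, ∀ v : EuclideanSpace ℝ (Fin d),
      v i = μ * v j → ⟪x - proj x, v⟫ = 0) (x : EuclideanSpace ℝ (Fin d))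
    {v : EuclideanSpace ℝ (Fin d)} (hv : v i = μ * v j) : ⟪v, proj x⟫ = ⟪v, x⟫ := by
  rw [real_inner_comm, inner_proj_left hprojorth x hv, real_inner_comm]

lemma proj_eq_self (hprojV : ∀ x, proj x i = μ * proj x j)
    (hprojorth : ∀ x, ∀ v : EuclideanSpace ℝ (Fin d), v i = μ * v j → ⟪x - proj x, v⟫ = 0)
    {y : EuclideanSpace ℝ (Fin d)} (hy : y i = μ * y j) : proj y = y := by
  have hV : (y - proj y) i = μ * (y - proj y) j := by
    simp only [PiLp.sub_apply, hy, hprojV]; ring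
  have := hprojorth y _ hV
  rwa [inner_self_eq_zero, sub_eq_zero, eq_comm] at this

lemma proj_mem_orthant (hij : i ≠ j) (hμ : 0 ≤ μ) (hprojV : ∀ x, proj x i = μ * proj x j)
    (hprojorth : ∀ x, ∀ v : EuclideanSpace ℝ (Fin d), v i = μ * v j → ⟪x - proj x, v⟫ = 0)
    {x : EuclideanSpace ℝ (Fin d)} (hx : x ∈ orthant d) : proj x ∈ orthant d := by
  have hj : 0 ≤ proj x j := by
    have h := hprojorth x (μ • EuclideanSpace.single i 1 + EuclideanSpace.single j 1)
      (by simp [hij, hij.symm])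
    simp only [inner_add_right, real_inner_smul_right, EuclideanSpace.inner_single_right,
      PiLp.sub_apply, hprojV, conj_trivial, one_mul] at h
    have hsum : (1 + μ ^ 2) * proj x j = μ * x i + x j := by linear_combination -h
    exact (mul_nonneg_iff_of_pos_left (by positivity)).1
      (hsum ▸ add_nonneg (mul_nonneg hμ (hx i)) (hx j))
  intro k
  obtain rfl | hki := eq_or_ne k i
  · rw [hprojV]; exact mul_nonneg hμ hj
  obtain rfl | hkj := eq_or_ne k j
  · exact hj
  have h := hprojorth x (EuclideanSpace.single k 1) (by simp [hki.symm, hkj.symm])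
  simp only [EuclideanSpace.inner_single_right, PiLp.sub_apply, conj_trivial, one_mul] at h
  linarith [hx k]

end Orthant

theorem stmt_16_general {d : ℕ} (i j : Fin d) (hij : i ≠ j) (μ : ℝ) (hμ : 0 ≤ μ)
    (proj : EuclideanSpace ℝ (Fin d) → EuclideanSpace ℝ (Fin d))
    (hprojV : ∀ x, proj x i = μ * proj x j)
    (hprojorth : ∀ x, ∀ v : EuclideanSpace ℝ (Fin d),
      v i = μ * v j → (inner ℝ (x - proj x) v : ℝ) = 0)
    (φ f₁ : EuclideanSpace ℝ (Fin d) → ℝ)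
    -- φ is a self-dual antinorm on K' = ℝ^d₊ ∩ V :
    (hφhom : ∀ x ∈ {x | x ∈ orthant d ∧ x i = μ * x j}, ∀ c : ℝ, 0 ≤ c →
      φ (c • x) = c * φ x)
    (hφpos : ∃ x ∈ {x | x ∈ orthant d ∧ x i = μ * x j}, 0 < φ x)
    (hφsd : ∀ y ∈ {x | x ∈ orthant d ∧ x i = μ * x j},
      sInf ((fun x => (inner ℝ y x : ℝ)) ''
        {x | (x ∈ orthant d ∧ x i = μ * x j) ∧ 1 ≤ φ x}) = φ y)
    -- f₁ is an antinorm on K₁ :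
    (hf₁nn : ∀ x ∈ {x | x ∈ orthant d ∧ x i ≤ μ * x j}, 0 ≤ f₁ x)
    -- f₁ coincides with φ on K' and does not exceed Φ on K₁ :
    (hcoin : ∀ x ∈ {x | x ∈ orthant d ∧ x i = μ * x j}, f₁ x = φ x)
    (hle : ∀ x ∈ {x | x ∈ orthant d ∧ x i ≤ μ * x j}, f₁ x ≤ φ (proj x))
    -- f₂ defined on K₂ by the polar formula :
    (f₂ : EuclideanSpace ℝ (Fin d) → ℝ)
    (hf₂def : ∀ y ∈ {x | x ∈ orthant d ∧ μ * x j ≤ x i}, f₂ y =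
      sInf ((fun x => (inner ℝ y x : ℝ) / f₁ x) ''
        {x | (x ∈ orthant d ∧ x i ≤ μ * x j) ∧ f₁ x ≠ 0})) :
    (∀ y ∈ {x | x ∈ orthant d ∧ x i = μ * x j}, f₂ y = φ y) ∧
    (∀ y ∈ {x | x ∈ orthant d ∧ μ * x j ≤ x i}, f₂ y ≤ φ (proj y)) := by
  set K' : Set (EuclideanSpace ℝ (Fin d)) := {x | x ∈ orthant d ∧ x i = μ * x j}
  set K₁ : Set (EuclideanSpace ℝ (Fin d)) := {x | x ∈ orthant d ∧ x i ≤ μ * x j}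
  set K₂ : Set (EuclideanSpace ℝ (Fin d)) := {x | x ∈ orthant d ∧ μ * x j ≤ x i}
  have hf₂ : ∀ y ∈ K₂, f₂ y = infInnerDiv K₁ f₁ y := hf₂def
  have hφdual : ∀ y ∈ K', antinormDual K' φ y = φ y := hφsd
  have hK'cone : ∀ x ∈ K', ∀ c : ℝ, 0 ≤ c → c • x ∈ K' := fun x hx c hc =>
    ⟨fun k => mul_nonneg hc (hx.1 k), by simp only [PiLp.smul_apply, smul_eq_mul, hx.2]; ring⟩
  have hprojK' : ∀ x ∈ orthant d, proj x ∈ K' := fun x hx =>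
    ⟨proj_mem_orthant hij hμ hprojV hprojorth hx, hprojV x⟩
  have hK'K₁ : K' ⊆ K₁ := fun x hx => ⟨hx.1, hx.2.le⟩
  have hK'K₂ : K' ⊆ K₂ := fun x hx => ⟨hx.1, hx.2.ge⟩
  obtain ⟨x₀, hx₀, hφx₀⟩ := hφpos
  have upper : ∀ y ∈ K₂, f₂ y ≤ φ (proj y) := by
    intro y hy
    rw [hf₂ y hy, ← hφdual _ (hprojK' y hy.1)]
    obtain ⟨hmem, hone⟩ := inv_smul_mem_and_apply_inv_smul_eq_one hK'cone hφhom hx₀ hφx₀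
    exact infInnerDiv_le_antinormDual hK'K₁ hf₁nn (fun x hx => (hcoin x hx).ge)
      ⟨_, hmem, hone.ge⟩ (fun x hx => inner_nonneg_of_mem_orthant hy.1 hx.1)
      (fun x hx => (inner_proj_left hprojorth y hx.2).symm)
  refine ⟨fun y hy => le_antisymm ?_ ?_, upper⟩
  · simpa only [proj_eq_self hprojV hprojorth hy.2] using upper y (hK'K₂ hy)
  · rw [hf₂ y (hK'K₂ hy), ← hφdual y hy]
    exact antinormDual_le_infInnerDiv hK'cone hφhom
      ⟨x₀, hK'K₁ hx₀, (hcoin x₀ hx₀).trans_ne hφx₀.ne'⟩ hf₁nn (fun x hx => hprojK' x hx.1) hle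
      (fun x hx => inner_nonneg_of_mem_orthant hy.1 hx.1)
      (fun x _ => (inner_proj_right hprojorth x hy.2).symm)

/-- With the setup of the lifting theorem (admissible hyperplane
V = {x : x_i = μ x_j} splitting ℝ^d₊ into K₁ and K₂, φ a self-dual antinorm on
K' = ℝ^d₊ ∩ V, f₁ an antinorm on K₁ with f₁|_{K'} = φ and f₁ ≤ Φ = φ ∘ proj),
the function f₂(y) = inf_{x ∈ K₁, f₁(x) ≠ 0} (y,x)/f₁(x) coincides with φ on K'
and satisfies f₂ ≤ Φ on K₂. -/
theorem stmt_16 {d : ℕ} (i j : Fin d) (hij : i ≠ j) (μ : ℝ) (hμ : 0 ≤ μ)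
    (proj : EuclideanSpace ℝ (Fin d) → EuclideanSpace ℝ (Fin d))
    (hprojV : ∀ x, proj x i = μ * proj x j)
    (hprojorth : ∀ x, ∀ v : EuclideanSpace ℝ (Fin d),
      v i = μ * v j → (inner ℝ (x - proj x) v : ℝ) = 0)
    (φ f₁ : EuclideanSpace ℝ (Fin d) → ℝ)
    -- φ is a self-dual antinorm on K' = ℝ^d₊ ∩ V :
    (hφconc : ConcaveOn ℝ {x | x ∈ orthant d ∧ x i = μ * x j} φ)
    (hφhom : ∀ x ∈ {x | x ∈ orthant d ∧ x i = μ * x j}, ∀ c : ℝ, 0 ≤ c →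
      φ (c • x) = c * φ x)
    (hφnn : ∀ x ∈ {x | x ∈ orthant d ∧ x i = μ * x j}, 0 ≤ φ x)
    (hφpos : ∃ x ∈ {x | x ∈ orthant d ∧ x i = μ * x j}, 0 < φ x)
    (hφsd : ∀ y ∈ {x | x ∈ orthant d ∧ x i = μ * x j},
      sInf ((fun x => (inner ℝ y x : ℝ)) ''
        {x | (x ∈ orthant d ∧ x i = μ * x j) ∧ 1 ≤ φ x}) = φ y)
    -- f₁ is an antinorm on K₁ :
    (hf₁conc : ConcaveOn ℝ {x | x ∈ orthant d ∧ x i ≤ μ * x j} f₁)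
    (hf₁hom : ∀ x ∈ {x | x ∈ orthant d ∧ x i ≤ μ * x j}, ∀ c : ℝ, 0 ≤ c →
      f₁ (c • x) = c * f₁ x)
    (hf₁nn : ∀ x ∈ {x | x ∈ orthant d ∧ x i ≤ μ * x j}, 0 ≤ f₁ x)
    (hf₁pos : ∃ x ∈ {x | x ∈ orthant d ∧ x i ≤ μ * x j}, 0 < f₁ x)
    -- f₁ coincides with φ on K' and does not exceed Φ on K₁ :
    (hcoin : ∀ x ∈ {x | x ∈ orthant d ∧ x i = μ * x j}, f₁ x = φ x)
    (hle : ∀ x ∈ {x | x ∈ orthant d ∧ x i ≤ μ * x j}, f₁ x ≤ φ (proj x))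
    -- f₂ defined on K₂ by the polar formula :
    (f₂ : EuclideanSpace ℝ (Fin d) → ℝ)
    (hf₂def : ∀ y ∈ {x | x ∈ orthant d ∧ μ * x j ≤ x i}, f₂ y =
      sInf ((fun x => (inner ℝ y x : ℝ) / f₁ x) ''
        {x | (x ∈ orthant d ∧ x i ≤ μ * x j) ∧ f₁ x ≠ 0})) :
    (∀ y ∈ {x | x ∈ orthant d ∧ x i = μ * x j}, f₂ y = φ y) ∧
    (∀ y ∈ {x | x ∈ orthant d ∧ μ * x j ≤ x i}, f₂ y ≤ φ (proj y)) :=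
  stmt_16_general i j hij μ hμ proj hprojV hprojorth φ f₁ hφhom hφpos hφsd hf₁nn hcoin hle f₂ hf₂def
end

section
/- If the splitting hyperplane V coincides with a coordinate hyperplane of ℝ^d₊ (say x_d = 0), then any antinorm f₁ on K₁ = ℝ^d₊ that coincides with φ on V ∩ ℝ^d₊ and satisfies f₁ ≤ Φ must equal Φ, the orthogonal extension of φ: f₁(x', x_d) = φ(x') for all x. -/
open Filter Topology

theorem ConcaveOn.le_add_of_bddBelow_on_ray {E : Type*} [AddCommGroup E] [Module ℝ E]
    {s : Set E} {f : E → ℝ} (hf : ConcaveOn ℝ s f) {a v : E} {m : ℝ}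
    (hray : ∀ t : ℝ, 0 ≤ t → a + t • v ∈ s) (hm : ∀ t : ℝ, 0 ≤ t → m ≤ f (a + t • v)) :
    f a ≤ f (a + v) := by
  have hlim : Tendsto (fun t : ℝ => (1 - t⁻¹) * f a + t⁻¹ * m) atTop (𝓝 (f a)) := by
    have h := ((tendsto_inv_atTop_zero.const_sub 1).mul_const (f a)).add
      (tendsto_inv_atTop_zero.mul_const m)
    simpa using h
  refine le_of_tendsto hlim ((eventually_ge_atTop 1).mono fun t ht => ?_)
  have ht0 : 0 < t := by linarith
  have ha : a ∈ s := by simpa using hray 0 le_rfl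
  have hcomb : (1 - t⁻¹) • a + t⁻¹ • (a + t • v) = a + v := by
    rw [smul_add, smul_smul, inv_mul_cancel₀ ht0.ne', one_smul, sub_smul, one_smul]
    abel
  have hconc := hf.2 ha (hray t ht0.le)
    (sub_nonneg.2 (inv_le_one_of_one_le₀ ht)) (inv_nonneg.2 ht0.le) (by ring)
  rw [hcomb, smul_eq_mul, smul_eq_mul] at hconc
  nlinarith [hm t ht0.le, inv_nonneg.2 ht0.le]

theorem update_zero_add_smul_sub_mem_orthant {n : ℕ} {x : EuclideanSpace ℝ (Fin n)}
    (hx : x ∈ orthant n) (i : Fin n) {t : ℝ} (ht : 0 ≤ t) :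
    WithLp.toLp 2 (Function.update x i 0) + t • (x - WithLp.toLp 2 (Function.update x i 0))
      ∈ orthant n := by
  intro j
  by_cases hj : j = i
  · subst hj
    simpa using mul_nonneg ht (hx j)
  · simpa [Function.update_of_ne hj] using hx j

theorem stmt_19_general {d : ℕ} (φ f₁ : EuclideanSpace ℝ (Fin (d + 1)) → ℝ)
    -- f₁ is an antinorm on K₁ = ℝ^{d+1}₊ :
    (hf₁conc : ConcaveOn ℝ (orthant (d + 1)) f₁)
    (hf₁nn : ∀ x ∈ orthant (d + 1), 0 ≤ f₁ x)
    -- f₁ coincides with φ on K' :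
    (hcoin : ∀ x ∈ {x | x ∈ orthant (d + 1) ∧ x (Fin.last d) = 0}, f₁ x = φ x)
    -- f₁ does not exceed the orthogonal extension Φ of φ :
    (hle : ∀ x ∈ orthant (d + 1),
      f₁ x ≤ φ (WithLp.toLp 2 (Function.update x (Fin.last d) 0))) :
    ∀ x ∈ orthant (d + 1), f₁ x = φ (WithLp.toLp 2 (Function.update x (Fin.last d) 0)) := by
  intro x hx
  set x' := WithLp.toLp 2 (Function.update x (Fin.last d) 0)
  have hray := fun t (ht : (0 : ℝ) ≤ t) => update_zero_add_smul_sub_mem_orthant hx (Fin.last d) ht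
  have hx'K : x' ∈ {x | x ∈ orthant (d + 1) ∧ x (Fin.last d) = 0} :=
    ⟨by simpa using hray 0 le_rfl, by simp [x']⟩
  refine le_antisymm (hle x hx) ?_
  rw [← hcoin x' hx'K]
  simpa using hf₁conc.le_add_of_bddBelow_on_ray hray fun t ht => hf₁nn _ (hray t ht)

/-- If the splitting hyperplane is the coordinate hyperplane {x_d = 0} of
ℝ^d₊, then any antinorm f₁ on K₁ = ℝ^d₊ coinciding on K' = {x ∈ ℝ^d₊ : x_d = 0}
with an antinorm φ and satisfying f₁ ≤ Φ (the orthogonal extension of φ)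
must equal Φ: f₁(x', x_d) = φ(x') for all x ∈ ℝ^d₊. -/
theorem stmt_19 {d : ℕ} (φ f₁ : EuclideanSpace ℝ (Fin (d + 1)) → ℝ)
    -- φ is an antinorm on K' = {x ∈ ℝ^{d+1}₊ : x_d = 0} :
    (hφconc : ConcaveOn ℝ {x | x ∈ orthant (d + 1) ∧ x (Fin.last d) = 0} φ)
    (hφhom : ∀ x ∈ {x | x ∈ orthant (d + 1) ∧ x (Fin.last d) = 0}, ∀ c : ℝ,
      0 ≤ c → φ (c • x) = c * φ x)
    (hφnn : ∀ x ∈ {x | x ∈ orthant (d + 1) ∧ x (Fin.last d) = 0}, 0 ≤ φ x)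
    (hφpos : ∃ x ∈ {x | x ∈ orthant (d + 1) ∧ x (Fin.last d) = 0}, 0 < φ x)
    -- f₁ is an antinorm on K₁ = ℝ^{d+1}₊ :
    (hf₁conc : ConcaveOn ℝ (orthant (d + 1)) f₁)
    (hf₁hom : ∀ x ∈ orthant (d + 1), ∀ c : ℝ, 0 ≤ c → f₁ (c • x) = c * f₁ x)
    (hf₁nn : ∀ x ∈ orthant (d + 1), 0 ≤ f₁ x)
    (hf₁pos : ∃ x ∈ orthant (d + 1), 0 < f₁ x)
    -- f₁ coincides with φ on K' :
    (hcoin : ∀ x ∈ {x | x ∈ orthant (d + 1) ∧ x (Fin.last d) = 0}, f₁ x = φ x)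
    -- f₁ does not exceed the orthogonal extension Φ of φ :
    (hle : ∀ x ∈ orthant (d + 1),
      f₁ x ≤ φ (WithLp.toLp 2 (Function.update x (Fin.last d) 0))) :
    ∀ x ∈ orthant (d + 1), f₁ x = φ (WithLp.toLp 2 (Function.update x (Fin.last d) 0)) :=
  stmt_19_general φ f₁ hf₁conc hf₁nn hcoin hle
end
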